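/- arXiv:2307.03442 — 2 statements merged into one kernel-verified Lean document; each statement's English description precedes it below -/
import Mathlib

section
/- Let ℓ be a line contained in ℙ¹×ℙ² under the Segre embedding into ℙ⁵ of bidegree (1,0), i.e. ℓ = ℙ¹×{y} for some y ∈ ℙ². If p = (a,b) ∈ ℙ¹×ℙ² is a point such that the linear span of {p} ∪ ℓ in ℙ⁵ is a plane meeting the Segre variety exactly in {p} ∪ ℓ, then a contradiction arises: the line joining (a,y) and (a,b) is a bidegree (0,1) curve lying in the Segre variety and in that plane, distinct from ℓ. Hence no such configuration exists with ℓ of bidegree (1,0). -/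
noncomputable section

/-- Representatives for points of `ℙ¹`. -/
abbrev V2 : Type := Fin 2 → ℂ
/-- Representatives for points of `ℙ²`. -/
abbrev V3 : Type := Fin 3 → ℂ
/-- Representatives for points of `ℙ⁵`, viewed as `2 × 3` arrays. -/
abbrev V6 : Type := Fin 2 → Fin 3 → ℂ

/-- The Segre map on vector representatives: `(u, v) ↦ (uᵢ vⱼ)`. -/
def segre (u : V2) (v : V3) : V6 := fun i j => u i * v j

/-- The Segre variety `ℙ¹ × ℙ² ⊆ ℙ⁵`. -/
def SegreVar : Set (Projectivization ℂ V6) :=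
  {P | ∃ (u : V2) (v : V3) (h : segre u v ≠ 0), P = Projectivization.mk ℂ (segre u v) h}

/-- The projective linear subspace of `ℙ⁵` associated to a linear subspace of `ℂ⁶`. -/
def projSet (W : Submodule ℂ V6) : Set (Projectivization ℂ V6) :=
  {P | P.rep ∈ W}

/-- The linear span (on representatives) of a set of projective points. -/
def projSpan (A : Set (Projectivization ℂ V6)) : Submodule ℂ V6 :=
  Submodule.span ℂ (Projectivization.rep '' A)

lemma mk_eq_mk' {x z : V6} (hx : x ≠ 0) (hz : z ≠ 0)
    (h : Projectivization.mk ℂ x hx = Projectivization.mk ℂ z hz) :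
    ∃ c : ℂ, c ≠ 0 ∧ x = c • z := by
  obtain ⟨c, hc⟩ := (Projectivization.mk_eq_mk_iff ℂ x z hx hz).mp h
  exact ⟨(c : ℂ), c.ne_zero, by rw [← hc]; simp [Units.smul_def]⟩

lemma rep_smul (x : V6) (hx : x ≠ 0) :
    ∃ c : ℂ, c ≠ 0 ∧ (Projectivization.mk ℂ x hx).rep = c • x :=
  mk_eq_mk' (Projectivization.rep_nonzero _) hx (Projectivization.mk_rep _)

lemma smul_segre (c : ℂ) (u : V2) (v : V3) : c • segre u v = segre (c • u) v := by
  funext i j; simp [segre]; ring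

lemma segre_add (u : V2) (v w : V3) : segre u (v + w) = segre u v + segre u w := by
  funext i j; simp [segre]; ring

/-- there is no configuration consisting of a bidegree `(1,0)` line
`ℓ = ℙ¹ × {y}` on the Segre variety together with a point `p = (a,b)` of the Segre
variety such that the linear span of `{p} ∪ ℓ` is a projective plane meeting the
Segre variety exactly in `{p} ∪ ℓ`. -/
theorem stmt0 (y : V3) (hy : y ≠ 0) (a : V2) (b : V3) (hp : segre a b ≠ 0)
    (ℓ : Set (Projectivization ℂ V6))
    (hℓ : ℓ = {P | ∃ (u : V2) (h : segre u y ≠ 0), P = Projectivization.mk ℂ (segre u y) h}) :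
    ¬ (Module.finrank ℂ
        (projSpan (insert (Projectivization.mk ℂ (segre a b) hp) ℓ)) = 3 ∧
      SegreVar ∩ projSet (projSpan (insert (Projectivization.mk ℂ (segre a b) hp) ℓ)) =
        insert (Projectivization.mk ℂ (segre a b) hp) ℓ) := by
  rintro ⟨h3, hint⟩
  -- a ≠ 0, pick a nonzero coordinate
  have ha : a ≠ 0 := by
    rintro rfl
    exact hp (by funext i j; simp [segre])
  obtain ⟨i0, hi0⟩ : ∃ i, a i ≠ 0 := by
    by_contra h
    push_neg at h
    exact ha (funext h)
  -- segre a y ≠ 0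
  have hay : segre a y ≠ 0 := by
    intro h0
    apply hy
    funext j
    have := congrFun (congrFun h0 i0) j
    simp only [segre, Pi.zero_apply] at this
    exact (mul_eq_zero.mp this).resolve_left hi0
  by_cases hby : ∃ t : ℂ, b = t • y
  · -- degenerate case: p lies on ℓ, so the span has dimension ≤ 2
    obtain ⟨t, rfl⟩ := hby
    have ht : t ≠ 0 := by
      rintro rfl
      exact hp (by funext i j; simp [segre])
    have hps : segre a (t • y) = t • segre a y := by
      funext i j; simp [segre]; ring
    have hpl : Projectivization.mk ℂ (segre a (t • y)) hp ∈ ℓ := by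
      rw [hℓ]
      refine ⟨a, hay, ?_⟩
      rw [(Projectivization.mk_eq_mk_iff ℂ _ _ hp hay)]
      exact ⟨Units.mk0 t ht, by simp [Units.smul_def, hps]⟩
    rw [Set.insert_eq_self.mpr hpl] at h3
    -- the span of ℓ is contained in the range of u ↦ segre u y
    let L : V2 →ₗ[ℂ] V6 :=
      { toFun := fun u => segre u y
        map_add' := by intro u w; funext i j; simp [segre]; ring
        map_smul' := by intro c u; funext i j; simp [segre]; ring }
    have hW : projSpan ℓ ≤ LinearMap.range L := by
      apply Submodule.span_le.mpr
      rintro w ⟨P, hP, rfl⟩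
      rw [hℓ] at hP
      obtain ⟨u, hu, rfl⟩ := hP
      obtain ⟨c, hc0, hc⟩ := rep_smul _ hu
      rw [hc, smul_segre]
      exact ⟨c • u, rfl⟩
    have h1 : Module.finrank ℂ (projSpan ℓ) ≤ Module.finrank ℂ (LinearMap.range L) :=
      Submodule.finrank_mono hW
    have h2 : Module.finrank ℂ (LinearMap.range L) ≤ Module.finrank ℂ V2 :=
      LinearMap.finrank_range_le L
    have : Module.finrank ℂ V2 = 2 := by simp
    omega
  · -- main case: the point segre a (y + b) lies in the plane and on the variety
    have hx : segre a (y + b) ≠ 0 := by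
      intro h0
      apply hby
      refine ⟨-1, ?_⟩
      funext j
      have := congrFun (congrFun h0 i0) j
      simp only [segre, Pi.zero_apply, Pi.add_apply] at this
      have h1 := (mul_eq_zero.mp this).resolve_left hi0
      simp only [Pi.smul_apply, smul_eq_mul]
      linear_combination h1
    set W := projSpan (insert (Projectivization.mk ℂ (segre a b) hp) ℓ) with hWdef
    have hab : segre a b ∈ W := by
      obtain ⟨c, hc0, hc⟩ := rep_smul _ hp
      have hrep : (Projectivization.mk ℂ (segre a b) hp).rep ∈ W :=
        Submodule.subset_span ⟨_, Set.mem_insert _ _, rfl⟩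
      have : segre a b = c⁻¹ • (Projectivization.mk ℂ (segre a b) hp).rep := by
        rw [hc, smul_smul, inv_mul_cancel₀ hc0, one_smul]
      rw [this]
      exact Submodule.smul_mem _ _ hrep
    have hayW : segre a y ∈ W := by
      have hQl : Projectivization.mk ℂ (segre a y) hay ∈
          insert (Projectivization.mk ℂ (segre a b) hp) ℓ := by
        apply Set.mem_insert_of_mem
        rw [hℓ]; exact ⟨a, hay, rfl⟩
      obtain ⟨c, hc0, hc⟩ := rep_smul _ hay
      have hrep : (Projectivization.mk ℂ (segre a y) hay).rep ∈ W :=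
        Submodule.subset_span ⟨_, hQl, rfl⟩
      have : segre a y = c⁻¹ • (Projectivization.mk ℂ (segre a y) hay).rep := by
        rw [hc, smul_smul, inv_mul_cancel₀ hc0, one_smul]
      rw [this]
      exact Submodule.smul_mem _ _ hrep
    have hxW : segre a (y + b) ∈ W := by
      rw [segre_add]
      exact Submodule.add_mem _ hayW hab
    have hPmem : Projectivization.mk ℂ (segre a (y + b)) hx ∈
        insert (Projectivization.mk ℂ (segre a b) hp) ℓ := by
      rw [← hint]
      refine ⟨⟨a, y + b, hx, rfl⟩, ?_⟩
      obtain ⟨c, hc0, hc⟩ := rep_smul _ hx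
      show (Projectivization.mk ℂ (segre a (y + b)) hx).rep ∈ W
      rw [hc]
      exact Submodule.smul_mem _ _ hxW
    rcases hPmem with hPp | hPl
    · -- P = p would force y proportional to b
      obtain ⟨c, hc0, hc⟩ := mk_eq_mk' hx hp hPp
      have key : ∀ j, y j = (c - 1) * b j := by
        intro j
        have := congrFun (congrFun hc i0) j
        simp only [segre, Pi.smul_apply, smul_eq_mul, Pi.add_apply] at this
        apply mul_left_cancel₀ hi0
        linear_combination this
      by_cases hc1 : c - 1 = 0
      · apply hy
        funext j
        show y j = 0
        rw [key j, hc1, zero_mul]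
      · apply hby
        refine ⟨(c - 1)⁻¹, ?_⟩
        funext j
        simp only [Pi.smul_apply, smul_eq_mul]
        rw [key j, ← mul_assoc, inv_mul_cancel₀ hc1, one_mul]
    · -- P ∈ ℓ would also force b proportional to y
      rw [hℓ] at hPl
      obtain ⟨u, hu, hPu⟩ := hPl
      obtain ⟨c, hc0, hc⟩ := mk_eq_mk' hx hu hPu
      apply hby
      refine ⟨c * u i0 / a i0 - 1, ?_⟩
      funext j
      have := congrFun (congrFun hc i0) j
      simp only [segre, Pi.smul_apply, smul_eq_mul, Pi.add_apply] at this
      simp only [Pi.smul_apply, smul_eq_mul]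
      field_simp
      linear_combination this
end
end

section
/- Let ℓ = {x}×L ⊂ ℙ¹×ℙ² (under the Segre embedding into ℙ⁵), where L ⊂ ℙ² is a line, and let p = (a,b) with a ≠ x and b ∉ L. Then the linear span of {p} ∪ ℓ is a projective plane in ℙ⁵ whose intersection with the Segre variety equals exactly {p} ∪ ℓ. -/
noncomputable section

/-!
The span of `{p} ∪ ℓ` is `ℂ·(a ⊗ b) ⊕ x ⊗ L`: contracting the `ℂ²` factor against `det(x, ·)`
kills `x ⊗ L` but not `a ⊗ b`, so the sum is direct and has dimension `1 + 2`.
If `u ⊗ v = α (a ⊗ b) + x ⊗ w`, the contractions against `det(x, ·)` and `det(a, ·)` give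
`det(x,u) v = α det(x,a) b` and `det(a,u) v = det(a,x) w`. If `det(x,u) = 0` then `α = 0` and the
point lies on `ℓ`; otherwise `w` is a multiple of `b`, and `b ∉ L` forces `w = 0`, so the point is `p`.
-/

open Projectivization

lemma Projectivization.rep_mk_mem_iff {K V : Type*} [Field K] [AddCommGroup V] [Module K V]
    {v : V} (hv : v ≠ 0) {W : Submodule K V} :
    (mk K v hv).rep ∈ W ↔ v ∈ W := by
  obtain ⟨c, hc⟩ := exists_smul_eq_mk_rep K v hv
  rw [← hc, Units.smul_def, Submodule.smul_mem_iff _ c.ne_zero]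

lemma mem_projSpan_of_mk_mem {A : Set (Projectivization ℂ V6)} {v : V6} (hv : v ≠ 0)
    (h : mk ℂ v hv ∈ A) : v ∈ projSpan A :=
  (rep_mk_mem_iff hv).mp (Submodule.subset_span ⟨_, h, rfl⟩)

lemma segre_ne_zero_iff {u : V2} {v : V3} : segre u v ≠ 0 ↔ u ≠ 0 ∧ v ≠ 0 := by
  simp only [ne_eq, funext_iff, segre, Pi.zero_apply, mul_eq_zero, not_forall, not_or]
  tauto

def segreMap (x : V2) : V3 →ₗ[ℂ] V6 where
  toFun := segre x
  map_add' v w := by funext i j; simp [segre, mul_add]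
  map_smul' c v := by funext i j; simp [segre, mul_left_comm]

lemma segreMap_apply (x : V2) (v : V3) : segreMap x v = segre x v := rfl

lemma segreMap_injective {x : V2} (hx : x ≠ 0) : Function.Injective (segreMap x) := by
  refine (injective_iff_map_eq_zero _).mpr fun w hw => ?_
  by_contra hw0
  exact segre_ne_zero_iff.mpr ⟨hx, hw0⟩ hw

def det2 (u v : V2) : ℂ := u 0 * v 1 - u 1 * v 0

lemma det2_self (u : V2) : det2 u u = 0 := by simp only [det2]; ring

lemma det2_swap (u v : V2) : det2 v u = - det2 u v := by simp only [det2]; ring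

lemma det2_ne_zero {x a : V2} (hx : x ≠ 0) (hax : a ∉ Submodule.span ℂ {x}) :
    det2 x a ≠ 0 := by
  have hli : LinearIndependent ℂ ![a, x] :=
    linearIndependent_fin2.mpr ⟨hx, fun c hc => hax (Submodule.mem_span_singleton.mpr ⟨c, hc⟩)⟩
  have := (Matrix.linearIndependent_rows_iff_isUnit (A := Matrix.of ![a, x])).mp hli
  rw [Matrix.isUnit_iff_isUnit_det, isUnit_iff_ne_zero, Matrix.det_fin_two] at this
  rw [← neg_ne_zero, ← det2_swap]
  simpa [det2] using this

-- contraction of the `ℂ²` factor against the linear form `det2 x`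
def wedge (x : V2) : V6 →ₗ[ℂ] V3 :=
  x 0 • LinearMap.proj 1 - x 1 • LinearMap.proj 0

lemma wedge_segre (x u : V2) (v : V3) : wedge x (segre u v) = det2 x u • v := by
  funext j; simp [wedge, segre, det2]; ring

lemma wedge_segreMap (x : V2) (w : V3) : wedge x (segreMap x w) = 0 := by
  rw [segreMap_apply, wedge_segre, det2_self, zero_smul]

lemma Submodule.eq_zero_of_smul_eq_smul_of_notMem {K V : Type*} [Field K] [AddCommGroup V]
    [Module K V] {L : Submodule K V} {w b : V} {r s : K} (hw : w ∈ L) (hb : b ∉ L)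
    (h : r • w = s • b) : s = 0 := by
  by_contra hs
  apply hb
  rw [← inv_smul_smul₀ hs b, ← h]
  exact L.smul_mem _ (L.smul_mem _ hw)

def segreLine (x : V2) (L : Submodule ℂ V3) : Set (Projectivization ℂ V6) :=
  {P | ∃ (w : V3) (h : segre x w ≠ 0), w ∈ L ∧ P = mk ℂ (segre x w) h}

section

variable {x a : V2} {b : V3} {L : Submodule ℂ V3}

lemma disjoint_span_segre_map (hd : det2 x a ≠ 0) (hb : b ≠ 0) :
    Disjoint (ℂ ∙ segre a b) (L.map (segreMap x)) := by
  refine (Submodule.disjoint_span_singleton_of_notMem fun hmem => ?_).symm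
  obtain ⟨w, -, hw⟩ := hmem
  have := congrArg (wedge x) hw
  rw [wedge_segreMap, wedge_segre] at this
  exact smul_ne_zero hd hb this.symm

lemma finrank_span_segre_sup_map (hx : x ≠ 0) (hd : det2 x a ≠ 0) (hb : b ≠ 0)
    [FiniteDimensional ℂ L] :
    Module.finrank ℂ ↥(ℂ ∙ segre a b ⊔ L.map (segreMap x)) = Module.finrank ℂ L + 1 := by
  have hab : segre a b ≠ 0 := segre_ne_zero_iff.mpr ⟨fun ha => hd (by simp [ha, det2]), hb⟩
  have := Submodule.finrank_sup_add_finrank_inf_eq (ℂ ∙ segre a b) (L.map (segreMap x))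
  rwa [(disjoint_span_segre_map hd hb).eq_bot, finrank_bot, add_zero, finrank_span_singleton hab,
    ← (Submodule.equivMapOfInjective _ (segreMap_injective hx) L).finrank_eq, add_comm] at this

lemma segre_mem_span_or_mem_map (hd : det2 x a ≠ 0) (hbL : b ∉ L) {u : V2} {v : V3}
    (h : segre u v ∈ ℂ ∙ segre a b ⊔ L.map (segreMap x)) :
    segre u v ∈ ℂ ∙ segre a b ∨ segre u v ∈ L.map (segreMap x) := by
  obtain ⟨_, hα, _, ⟨w, hw, rfl⟩, hsum⟩ := Submodule.mem_sup.mp h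
  obtain ⟨α, rfl⟩ := Submodule.mem_span_singleton.mp hα
  have hb : b ≠ 0 := fun hb => hbL (hb ▸ L.zero_mem)
  have hwedge_x : det2 x u • v = (α * det2 x a) • b := by
    simpa [wedge_segre, wedge_segreMap, smul_smul] using (congrArg (wedge x) hsum).symm
  have hwedge_a : det2 a u • v = det2 a x • w := by
    simpa [wedge_segre, segreMap_apply, det2_self] using (congrArg (wedge a) hsum).symm
  by_cases hu : det2 x u = 0
  · right
    have hα : α = 0 := by
      rw [hu, zero_smul, eq_comm, smul_eq_zero] at hwedge_x
      simpa [hd, hb] using hwedge_x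
    rw [← hsum, hα, zero_smul, zero_add]
    exact Submodule.mem_map_of_mem hw
  · left
    have hw_b : (det2 x u * det2 a x) • w = (det2 a u * (α * det2 x a)) • b := by
      rw [mul_smul, ← hwedge_a, smul_comm, hwedge_x, smul_smul]
    have hw0 : w = 0 := by
      have hxa : det2 a x ≠ 0 := by rwa [det2_swap, neg_ne_zero]
      rw [Submodule.eq_zero_of_smul_eq_smul_of_notMem hw hbL hw_b, zero_smul,
        smul_eq_zero] at hw_b
      simpa [hu, hxa] using hw_b
    rw [← hsum, hw0, map_zero, add_zero]
    exact Submodule.smul_mem _ _ (Submodule.mem_span_singleton_self _)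

lemma rep_mem_span_segre_sup_map (hab : segre a b ≠ 0) {P : Projectivization ℂ V6}
    (hP : P ∈ insert (mk ℂ (segre a b) hab) (segreLine x L)) :
    P.rep ∈ ℂ ∙ segre a b ⊔ L.map (segreMap x) := by
  rcases hP with rfl | ⟨w, h, hw, rfl⟩
  · exact (rep_mk_mem_iff hab).mpr
      (Submodule.mem_sup_left (Submodule.mem_span_singleton_self _))
  · exact (rep_mk_mem_iff h).mpr (Submodule.mem_sup_right (Submodule.mem_map_of_mem hw))

lemma projSpan_insert_segreLine (hab : segre a b ≠ 0) (hx : x ≠ 0) :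
    projSpan (insert (mk ℂ (segre a b) hab) (segreLine x L)) =
      ℂ ∙ segre a b ⊔ L.map (segreMap x) := by
  refine le_antisymm (Submodule.span_le.mpr ?_) (sup_le ?_ ?_)
  · rintro _ ⟨P, hP, rfl⟩
    exact rep_mem_span_segre_sup_map hab hP
  · exact (Submodule.span_singleton_le_iff_mem _ _).mpr
      (mem_projSpan_of_mk_mem hab (Set.mem_insert _ _))
  · refine Submodule.map_le_iff_le_comap.mpr fun w hw => ?_
    rcases eq_or_ne w 0 with rfl | hw0
    · exact Submodule.zero_mem _
    · have h : segre x w ≠ 0 := segre_ne_zero_iff.mpr ⟨hx, hw0⟩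
      exact mem_projSpan_of_mk_mem h (Set.mem_insert_of_mem _ ⟨w, h, hw, rfl⟩)

lemma segreVar_inter_projSet_span_segre_sup_map (hab : segre a b ≠ 0) (hd : det2 x a ≠ 0)
    (hbL : b ∉ L) :
    SegreVar ∩ projSet (ℂ ∙ segre a b ⊔ L.map (segreMap x)) =
      insert (mk ℂ (segre a b) hab) (segreLine x L) := by
  ext P
  constructor
  · rintro ⟨⟨u, v, h, rfl⟩, hP⟩
    rcases segre_mem_span_or_mem_map hd hbL ((rep_mk_mem_iff h).mp hP) with hmem | ⟨w, hw, hwuv⟩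
    · exact Or.inl ((mk_eq_mk_iff' ℂ _ _ h hab).mpr (Submodule.mem_span_singleton.mp hmem))
    · rw [segreMap_apply] at hwuv
      exact Or.inr ⟨w, hwuv ▸ h, hw, (mk_eq_mk_iff' ℂ _ _ _ _).mpr ⟨1, by rw [one_smul, hwuv]⟩⟩
  · intro hP
    refine ⟨?_, rep_mem_span_segre_sup_map hab hP⟩
    rcases hP with rfl | ⟨w, h, -, rfl⟩
    exacts [⟨a, b, hab, rfl⟩, ⟨x, w, h, rfl⟩]

end

theorem stmt1_general (x : V2) (hx : x ≠ 0) (L : Submodule ℂ V3) (hL : Module.finrank ℂ L = 2)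
    (a : V2) (b : V3) (hb : b ≠ 0)
    (hax : a ∉ Submodule.span ℂ {x})  -- `a ≠ x` as points of `ℙ¹`
    (hbL : b ∉ L)                      -- `b ∉ L` as points of `ℙ²`
    (hp : segre a b ≠ 0)
    (ℓ : Set (Projectivization ℂ V6))
    (hℓ : ℓ = {P | ∃ (w : V3) (h : segre x w ≠ 0),
            w ∈ L ∧ P = Projectivization.mk ℂ (segre x w) h}) :
    Module.finrank ℂ
        (projSpan (insert (Projectivization.mk ℂ (segre a b) hp) ℓ)) = 3 ∧
      SegreVar ∩ projSet (projSpan (insert (Projectivization.mk ℂ (segre a b) hp) ℓ)) =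
        insert (Projectivization.mk ℂ (segre a b) hp) ℓ := by
  change ℓ = segreLine x L at hℓ
  subst hℓ
  have hd : det2 x a ≠ 0 := det2_ne_zero hx hax
  have : FiniteDimensional ℂ L := Module.finite_of_finrank_eq_succ hL
  rw [projSpan_insert_segreLine hp hx]
  exact ⟨by rw [finrank_span_segre_sup_map hx hd hb, hL],
    segreVar_inter_projSet_span_segre_sup_map hp hd hbL⟩

/-- for `ℓ = {x} × L` a bidegree `(0,1)` line on the Segre variety
(`L ⊆ ℙ²` a line) and `p = (a,b)` with `a ≠ x` and `b ∉ L`, the linear span of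
`{p} ∪ ℓ` is a projective plane (a 3-dimensional linear subspace) whose
intersection with the Segre variety is exactly `{p} ∪ ℓ`. -/
theorem stmt1 (x : V2) (hx : x ≠ 0) (L : Submodule ℂ V3) (hL : Module.finrank ℂ L = 2)
    (a : V2) (ha : a ≠ 0) (b : V3) (hb : b ≠ 0)
    (hax : a ∉ Submodule.span ℂ {x})  -- `a ≠ x` as points of `ℙ¹`
    (hbL : b ∉ L)                      -- `b ∉ L` as points of `ℙ²`
    (hp : segre a b ≠ 0)
    (ℓ : Set (Projectivization ℂ V6))
    (hℓ : ℓ = {P | ∃ (w : V3) (h : segre x w ≠ 0),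
            w ∈ L ∧ P = Projectivization.mk ℂ (segre x w) h}) :
    Module.finrank ℂ
        (projSpan (insert (Projectivization.mk ℂ (segre a b) hp) ℓ)) = 3 ∧
      SegreVar ∩ projSet (projSpan (insert (Projectivization.mk ℂ (segre a b) hp) ℓ)) =
        insert (Projectivization.mk ℂ (segre a b) hp) ℓ :=
  stmt1_general x hx L hL a b hb hax hbL hp ℓ hℓ
end
end
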